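/- arXiv:1902.09762 — 2 statements merged into one kernel-verified Lean document; each statement's English description precedes it below -/
import Mathlib

section
/- Let V be a real inner product space and let R : V → V → V → V be a trilinear map such that ⟨R(X,Y)Z, X⟩ = ⟨R(X,Z)Y, X⟩ for all X, Y, Z ∈ V. If ⟨R(X,Y)Z, X⟩ = 0 whenever X, Y, Z are three orthonormal vectors of V, then ⟨R(X,Y)Y, X⟩ = ⟨R(X,Z)Z, X⟩ for all orthonormal triples X, Y, Z in V. -/
open RealInnerProductSpace

/-- If `⟪R X Y Z, X⟫` is symmetric in `Y, Z` and vanishes on orthonormal triples,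
then `⟪R X Y Y, X⟫ = ⟪R X Z Z, X⟫` for all orthonormal triples `X, Y, Z`. -/
theorem stmt_0
    {V : Type*} [NormedAddCommGroup V] [InnerProductSpace ℝ V]
    (R : V →ₗ[ℝ] V →ₗ[ℝ] V →ₗ[ℝ] V)
    (hsymm : ∀ X Y Z : V, ⟪R X Y Z, X⟫ = ⟪R X Z Y, X⟫)
    (hvanish : ∀ X Y Z : V, ‖X‖ = 1 → ‖Y‖ = 1 → ‖Z‖ = 1 →
      ⟪X, Y⟫ = 0 → ⟪X, Z⟫ = 0 → ⟪Y, Z⟫ = 0 → ⟪R X Y Z, X⟫ = 0)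
    (X Y Z : V) (hX : ‖X‖ = 1) (hY : ‖Y‖ = 1) (hZ : ‖Z‖ = 1)
    (hXY : ⟪X, Y⟫ = 0) (hXZ : ⟪X, Z⟫ = 0) (hYZ : ⟪Y, Z⟫ = 0) :
    ⟪R X Y Y, X⟫ = ⟪R X Z Z, X⟫ := by
  set c : ℝ := (Real.sqrt 2)⁻¹ with hc
  have h2 : (0:ℝ) < Real.sqrt 2 := Real.sqrt_pos.mpr (by norm_num)
  have hc0 : c ≠ 0 := by positivity
  have hcc : c * c = 2⁻¹ := by
    rw [hc, ← mul_inv]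
    rw [Real.mul_self_sqrt (by norm_num)]
  have hYY : ⟪Y, Y⟫ = 1 := by
    rw [real_inner_self_eq_norm_sq, hY]; norm_num
  have hZZ : ⟪Z, Z⟫ = 1 := by
    rw [real_inner_self_eq_norm_sq, hZ]; norm_num
  have hZY : ⟪Z, Y⟫ = 0 := by rw [real_inner_comm]; exact hYZ
  set a : V := c • (Y + Z) with ha
  set b : V := c • (Y - Z) with hb
  have hna : ‖a‖ = 1 := by
    have : ‖a‖ ^ 2 = 1 := by
      rw [← real_inner_self_eq_norm_sq, ha, real_inner_smul_left, real_inner_smul_right,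
        inner_add_add_self, hYY, hZZ, hYZ, hZY]
      rw [← mul_assoc, hcc]; ring
    nlinarith [norm_nonneg a]
  have hnb : ‖b‖ = 1 := by
    have : ‖b‖ ^ 2 = 1 := by
      rw [← real_inner_self_eq_norm_sq, hb, real_inner_smul_left, real_inner_smul_right,
        inner_sub_sub_self, hYY, hZZ, hYZ, hZY]
      rw [← mul_assoc, hcc]; ring
    nlinarith [norm_nonneg b]
  have hXa : ⟪X, a⟫ = 0 := by
    rw [ha, real_inner_smul_right, inner_add_right, hXY, hXZ]; ring
  have hXb : ⟪X, b⟫ = 0 := by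
    rw [hb, real_inner_smul_right, inner_sub_right, hXY, hXZ]; ring
  have hab : ⟪a, b⟫ = 0 := by
    rw [ha, hb, real_inner_smul_left, real_inner_smul_right, inner_add_left,
      inner_sub_right, inner_sub_right, hYY, hZZ, hYZ, hZY]; ring
  have hv := hvanish X a b hX hna hnb hXa hXb hab
  rw [ha, hb] at hv
  simp only [map_smul, LinearMap.smul_apply, map_add, map_sub, LinearMap.add_apply,
    LinearMap.sub_apply, inner_smul_left, inner_add_left, inner_sub_left,
    RCLike.conj_to_real] at hv
  have hcross := hsymm X Y Z
  have hkey : ⟪R X Y Y, X⟫ - ⟪R X Z Z, X⟫ = 0 := by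
    have h : c * (c * (⟪R X Y Y, X⟫ - ⟪R X Z Z, X⟫)) = 0 := by
      rw [← hv]; ring_nf; rw [hcross] at *; ring
    simpa [hc0, mul_eq_zero] using h
  linarith
end

section
/- Let V be a real inner product space and let R : V → V → V → V be a trilinear map such that ⟨R(X,Y)Z, X⟩ = ⟨R(X,Z)Y, X⟩ for all X, Y, Z ∈ V, and such that ⟨R(X,Y)Z, X⟩ = 0 whenever X, Y, Z are three orthonormal vectors of V. Define the sectional curvature of a pair of linearly independent vectors X, Y by K(X,Y) = ⟨R(X,Y)Y, X⟩ / (‖X‖²‖Y‖² − ⟨X,Y⟩²). Then for every orthonormal triple X, Y, Z in V one has K(X,Y) = K(X,Z). -/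
open RealInnerProductSpace

lemma aux_indep {V : Type*} [NormedAddCommGroup V] [InnerProductSpace ℝ V]
    (X Y : V) (hX : ‖X‖ = 1) (hY : ‖Y‖ = 1) (hXY : ⟪X, Y⟫ = 0) :
    LinearIndependent ℝ ![X, Y] := by
  rw [LinearIndependent.pair_iff]
  intro s t hst
  have h1 : ⟪X, s • X + t • Y⟫ = 0 := by rw [hst]; simp
  have h2 : ⟪Y, s • X + t • Y⟫ = 0 := by rw [hst]; simp
  rw [inner_add_right, real_inner_smul_right, real_inner_smul_right,
    real_inner_self_eq_norm_sq, hX, hXY] at h1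
  rw [inner_add_right, real_inner_smul_right, real_inner_smul_right,
    real_inner_self_eq_norm_sq, hY, real_inner_comm, hXY] at h2
  constructor <;> [skip; skip] <;> nlinarith [h1, h2]

/-- If `⟪R X Y Z, X⟫` is symmetric in `Y, Z` and vanishes on orthonormal triples, then
the sectional curvature `K(X,Y) = ⟪R X Y Y, X⟫ / (‖X‖²‖Y‖² − ⟪X,Y⟫²)` satisfies
`K(X,Y) = K(X,Z)` for every orthonormal triple `X, Y, Z`. -/
theorem stmt_3
    {V : Type*} [NormedAddCommGroup V] [InnerProductSpace ℝ V]
    (R : V →ₗ[ℝ] V →ₗ[ℝ] V →ₗ[ℝ] V)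
    (hsymm : ∀ X Y Z : V, ⟪R X Y Z, X⟫ = ⟪R X Z Y, X⟫)
    (hvanish : ∀ X Y Z : V, ‖X‖ = 1 → ‖Y‖ = 1 → ‖Z‖ = 1 →
      ⟪X, Y⟫ = 0 → ⟪X, Z⟫ = 0 → ⟪Y, Z⟫ = 0 → ⟪R X Y Z, X⟫ = 0)
    (K : V → V → ℝ)
    (hK : ∀ X Y : V, LinearIndependent ℝ ![X, Y] →
      K X Y = ⟪R X Y Y, X⟫ / (‖X‖ ^ 2 * ‖Y‖ ^ 2 - ⟪X, Y⟫ ^ 2))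
    (X Y Z : V) (hX : ‖X‖ = 1) (hY : ‖Y‖ = 1) (hZ : ‖Z‖ = 1)
    (hXY : ⟪X, Y⟫ = 0) (hXZ : ⟪X, Z⟫ = 0) (hYZ : ⟪Y, Z⟫ = 0) :
    K X Y = K X Z := by
  have s2 : (0:ℝ) < Real.sqrt 2 := by positivity
  set a : ℝ := (Real.sqrt 2)⁻¹ with ha
  have hapos : (0:ℝ) < a := by positivity
  have hs2 : Real.sqrt 2 * Real.sqrt 2 = 2 := Real.mul_self_sqrt (by norm_num)
  have hnadd : ‖Y + Z‖ = Real.sqrt 2 := by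
    have : ‖Y + Z‖ ^ 2 = 2 := by
      rw [norm_add_sq_real, hY, hZ, hYZ]; ring
    nlinarith [norm_nonneg (Y + Z)]
  have hnsub : ‖Y - Z‖ = Real.sqrt 2 := by
    have : ‖Y - Z‖ ^ 2 = 2 := by
      rw [norm_sub_sq_real, hY, hZ, hYZ]; ring
    nlinarith [norm_nonneg (Y - Z)]
  have hv := hvanish X (a • (Y + Z)) (a • (Y - Z)) hX
    (by rw [norm_smul, hnadd]; simp [ha, abs_of_pos, s2.le])
    (by rw [norm_smul, hnsub]; simp [ha, abs_of_pos, s2.le])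
    (by rw [real_inner_smul_right, inner_add_right, hXY, hXZ]; ring)
    (by rw [real_inner_smul_right, inner_sub_right, hXY, hXZ]; ring)
    (by
      rw [real_inner_smul_left, real_inner_smul_right, inner_sub_right,
        inner_add_left, inner_add_left, real_inner_self_eq_norm_sq,
        real_inner_self_eq_norm_sq, hY, hZ, real_inner_comm Z Y]
      ring)
  have hexp : ⟪R X (a • (Y + Z)) (a • (Y - Z)), X⟫
      = a * a * (⟪R X Y Y, X⟫ - ⟪R X Y Z, X⟫ + ⟪R X Z Y, X⟫ - ⟪R X Z Z, X⟫) := by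
    simp only [map_add, map_sub, map_smul, LinearMap.add_apply, LinearMap.sub_apply,
      LinearMap.smul_apply, inner_add_left, inner_sub_left, real_inner_smul_left]
    ring
  have hcross : ⟪R X Y Z, X⟫ = ⟪R X Z Y, X⟫ := hsymm X Y Z
  have hkey : ⟪R X Y Y, X⟫ = ⟪R X Z Z, X⟫ := by
    rw [hexp, hcross] at hv
    have : a * a ≠ 0 := by positivity
    have := mul_eq_zero.mp hv
    rcases this with h | h
    · exact absurd h ‹a * a ≠ 0›
    · linarith
  rw [hK X Y (aux_indep X Y hX hY hXY), hK X Z (aux_indep X Z hX hZ hXZ),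
    hX, hY, hZ, hXY, hXZ, hkey]
end
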